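/- Let PN = (P,T,E⁻,E⁺,W) be a Petri net, M : P → ℕ a marking, and T_f = {t₁, …, t_n} a firing set w.r.t. M (a non-conflicting set of transitions enabled w.r.t. M). Then for any ordering t₁, …, t_n of T_f, the transitions can be fired sequentially one at a time: t₁ is enabled w.r.t. M₀ = M, and for each i, t_{i+1} is enabled w.r.t. the marking M_i obtained by executing {t_i} at M_{i−1}; moreover the final marking M_n equals the marking obtained by executing the whole set T_f simultaneously at M. -/

import Mathlib

/-- A Petri net `PN = (P, T, E⁻, E⁺, W)`: `Em` is the set of place-transition
arcs `E⁻ ⊆ P × T`, `Ep` the set of transition-place arcs `E⁺ ⊆ T × P`, and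
`Wm`/`Wp` give the (positive) arc weights on arcs of `E⁻`/`E⁺`. -/
structure PetriNet (P T : Type) where
  Em : Finset (P × T)
  Ep : Finset (T × P)
  Wm : P → T → ℕ
  Wp : T → P → ℕ
  Wm_pos : ∀ p t, (p, t) ∈ Em → 0 < Wm p t
  Wp_pos : ∀ t p, (t, p) ∈ Ep → 0 < Wp t p

variable {P T : Type} [DecidableEq P] [DecidableEq T]

/-- A transition `t` is enabled w.r.t. marking `M` if every pre-set place has
at least arc-weight many tokens. -/
def enabled (N : PetriNet P T) (M : P → ℕ) (t : T) : Prop :=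
  ∀ p, (p, t) ∈ N.Em → N.Wm p t ≤ M p

/-- Total token consumption at place `p` by the transition set `Te`:
`Σ_{t ∈ Te, (p,t) ∈ E⁻} W(p,t)`. -/
def consumption (N : PetriNet P T) (Te : Finset T) (p : P) : ℕ :=
  ∑ t ∈ Te.filter (fun t => (p, t) ∈ N.Em), N.Wm p t

/-- Total token production at place `p` by the transition set `Te`:
`Σ_{t ∈ Te, (t,p) ∈ E⁺} W(t,p)`. -/
def production (N : PetriNet P T) (Te : Finset T) (p : P) : ℕ :=
  ∑ t ∈ Te.filter (fun t => (t, p) ∈ N.Ep), N.Wp t p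

/-- A set of transitions conflicts w.r.t. `M` if some place would be
overconsumed. -/
def conflicts (N : PetriNet P T) (M : P → ℕ) (Te : Finset T) : Prop :=
  ∃ p, M p < consumption N Te p

/-- A firing set: a non-conflicting set of enabled transitions. -/
def firingSet (N : PetriNet P T) (M : P → ℕ) (Te : Finset T) : Prop :=
  (∀ t ∈ Te, enabled N M t) ∧ ¬ conflicts N M Te

/-- Executing a firing set: `M'(p) = M(p) − Σ consumption + Σ production`. -/
def exec (N : PetriNet P T) (M : P → ℕ) (Te : Finset T) : P → ℕ :=
  fun p => M p - consumption N Te p + production N Te p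

/-- Sequential execution of a list of transitions, firing the singletons one
at a time. -/
def seqExec {P T : Type} [DecidableEq P] [DecidableEq T]
    (N : PetriNet P T) (M : P → ℕ) : List T → (P → ℕ)
  | [] => M
  | t :: ts => seqExec N (exec N M {t}) ts

/-! Because no place is overconsumed by a conflict-free set, the truncated subtraction in `exec`
never truncates, so executing `insert t S` is executing `{t}` and then `S`, and `S` is still
conflict-free at the intermediate marking. Non-conflict alone already gives enabledness of every
member, so an induction along the list proves both claims. -/

section Sequentialization

variable (N : PetriNet P T)

theorem consumption_singleton (t : T) (p : P) :
    consumption N {t} p = if (p, t) ∈ N.Em then N.Wm p t else 0 := by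
  simp only [consumption, Finset.sum_filter, Finset.sum_singleton]

theorem consumption_insert {t : T} {S : Finset T} (ht : t ∉ S) (p : P) :
    consumption N (insert t S) p = consumption N {t} p + consumption N S p := by
  simp only [consumption, Finset.sum_filter, Finset.sum_insert ht, Finset.sum_singleton]

theorem production_insert {t : T} {S : Finset T} (ht : t ∉ S) (p : P) :
    production N (insert t S) p = production N {t} p + production N S p := by
  simp only [production, Finset.sum_filter, Finset.sum_insert ht, Finset.sum_singleton]

theorem consumption_mono {S S' : Finset T} (h : S ⊆ S') (p : P) :
    consumption N S p ≤ consumption N S' p :=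
  Finset.sum_le_sum_of_subset (Finset.filter_subset_filter _ h)

theorem not_conflicts_mono {M : P → ℕ} {S S' : Finset T} (h : S ⊆ S')
    (hS' : ¬ conflicts N M S') : ¬ conflicts N M S := by
  simp only [conflicts, not_exists, not_lt] at hS' ⊢
  exact fun p => (consumption_mono N h p).trans (hS' p)

theorem enabled_iff_not_conflicts_singleton (M : P → ℕ) (t : T) :
    enabled N M t ↔ ¬ conflicts N M {t} := by
  simp only [enabled, conflicts, consumption_singleton, not_exists, not_lt]
  refine forall_congr' fun p => ?_
  split_ifs with hp <;> simp [hp]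

theorem enabled_of_mem_of_not_conflicts {M : P → ℕ} {S : Finset T} {t : T} (ht : t ∈ S)
    (hS : ¬ conflicts N M S) : enabled N M t :=
  (enabled_iff_not_conflicts_singleton N M t).mpr
    (not_conflicts_mono N (Finset.singleton_subset_iff.mpr ht) hS)

theorem not_conflicts_exec_singleton {M : P → ℕ} {t : T} {S : Finset T} (ht : t ∉ S)
    (h : ¬ conflicts N M (insert t S)) : ¬ conflicts N (exec N M {t}) S := by
  simp only [conflicts, not_exists, not_lt, consumption_insert N ht] at h ⊢
  intro p
  have := h p
  simp only [exec]
  omega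

theorem exec_insert {M : P → ℕ} {t : T} {S : Finset T} (ht : t ∉ S)
    (h : ¬ conflicts N M (insert t S)) :
    exec N M (insert t S) = exec N (exec N M {t}) S := by
  simp only [conflicts, not_exists, not_lt, consumption_insert N ht] at h
  funext p
  have := h p
  simp only [exec, consumption_insert N ht, production_insert N ht]
  omega

theorem seqExec_eq_exec {L : List T} (hnd : L.Nodup) {M : P → ℕ}
    (hL : ¬ conflicts N M L.toFinset) : seqExec N M L = exec N M L.toFinset := by
  induction L generalizing M with
  | nil => funext p; simp [seqExec, exec, consumption, production]
  | cons t ts ih =>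
    obtain ⟨ht, hts⟩ := List.nodup_cons.mp hnd
    rw [List.toFinset_cons] at hL ⊢
    have ht' : t ∉ ts.toFinset := List.mem_toFinset.not.mpr ht
    rw [seqExec, ih hts (not_conflicts_exec_singleton N ht' hL), exec_insert N ht' hL]

theorem enabled_seqExec_take {L : List T} (hnd : L.Nodup) {M : P → ℕ}
    (hL : ¬ conflicts N M L.toFinset) (i : ℕ) (hi : i < L.length) :
    enabled N (seqExec N M (L.take i)) (L.get ⟨i, hi⟩) := by
  induction L generalizing M i with
  | nil => exact absurd hi (Nat.not_lt_zero i)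
  | cons t ts ih =>
    obtain ⟨ht, hts⟩ := List.nodup_cons.mp hnd
    rw [List.toFinset_cons] at hL
    cases i with
    | zero => exact enabled_of_mem_of_not_conflicts N (Finset.mem_insert_self t _) hL
    | succ j =>
      exact ih hts (not_conflicts_exec_singleton N (List.mem_toFinset.not.mpr ht) hL) j
        (Nat.lt_of_succ_lt_succ hi)

end Sequentialization

/-- If `Tf` is a firing set w.r.t. `M`, then for any ordering
`t₁, …, tₙ` of `Tf` the transitions can be fired sequentially one at a time:
each `t_{i+1}` is enabled w.r.t. the marking obtained by executing the
singletons of the first `i` transitions, and the final marking equals the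
marking obtained by executing the whole set `Tf` simultaneously at `M`. -/
theorem firingSet_sequentializable {P T : Type} [DecidableEq P] [DecidableEq T]
    (N : PetriNet P T) (M : P → ℕ) (Tf : Finset T)
    (hf : firingSet N M Tf)
    (L : List T) (hnd : L.Nodup) (hL : L.toFinset = Tf) :
    (∀ i (h : i < L.length), enabled N (seqExec N M (L.take i)) (L.get ⟨i, h⟩)) ∧
    seqExec N M L = exec N M Tf := by
  subst hL
  exact ⟨enabled_seqExec_take N hnd hf.2, seqExec_eq_exec N hnd hf.2⟩
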